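/- Let L be a timed language recognized by a K-acceptor, v a timed word, a ∈ Σ, and t_v, t'_v ∈ ℝ≥0 with c^K(v) + t_v ≡^K c^K(v) + t'_v. Set v1 = v(t_v·a) and v2 = v(t'_v·a). Then c^K(v1) ≡^K c^K(v2) and τ_{v2→v1}(v2^{-1}L) = v1^{-1}L. -/

import Mathlib

open scoped NNReal Classical

namespace IRTA

/-- A timestamp is a finite sequence of non-negative reals. -/
abbrev Timestamp : Type := List ℝ≥0

/-- A timed word is a finite sequence of (delay, letter) pairs. -/
abbrev TimedWord (A : Type) : Type := List (ℝ≥0 × A)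

/-- Fractional part of a non-negative real. -/
noncomputable def fracPart (x : ℝ≥0) : ℝ≥0 := x - (⌊x⌋₊ : ℝ≥0)

/-- `x` is a natural-number value. -/
def IsNatVal (x : ℝ≥0) : Prop := ∃ m : ℕ, x = (m : ℝ≥0)

/-- Region equivalence `≡^K`. -/
def RegEq (K : ℕ) (x y : ℝ≥0) : Prop :=
  (⌊x⌋₊ = ⌊y⌋₊ ∧ (fracPart x = 0 ↔ fracPart y = 0)) ∨ ((K : ℝ≥0) < x ∧ (K : ℝ≥0) < y)

/-- One step of the (greedy) clock evolution: reset whenever the value is an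
integer between `0` and `K`. -/
noncomputable def resetStep (K : ℕ) (v : ℝ≥0) : ℝ≥0 :=
  if ∃ m : ℕ, m ≤ K ∧ v = (m : ℝ≥0) then 0 else v

/-- Auxiliary function computing `c^K` with accumulator `v`. -/
noncomputable def cKAux (K : ℕ) : ℝ≥0 → Timestamp → ℝ≥0
  | v, [] => v
  | v, t :: d => cKAux K (resetStep K (v + t)) d

/-- `c^K(d)`: the sum of the delays after the last integral position of `d`. -/
noncomputable def cK (K : ℕ) (d : Timestamp) : ℝ≥0 := cKAux K 0 d

/-- `c^K` of a timed word is `c^K` of its timestamp. -/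
noncomputable def cKW {A : Type} (K : ℕ) (w : TimedWord A) : ℝ≥0 :=
  cK K (w.map Prod.fst)

/-- `c^K_⊤` : `c^K` truncated at `K`. -/
noncomputable def cKTop {A : Type} (K : ℕ) (w : TimedWord A) : WithTop ℝ≥0 :=
  if cKW K w ≤ (K : ℝ≥0) then ((cKW K w : ℝ≥0) : WithTop ℝ≥0) else ⊤

/-! ### Clock constraints and one-clock timed automata -/

/-- Clock constraints `φ ::= x < m | m < x | x = m | φ ∧ φ`. -/
inductive CC : Type where
  | lt : ℕ → CC
  | gt : ℕ → CC
  | eq : ℕ → CC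
  | and : CC → CC → CC

/-- Satisfaction of a clock constraint by a clock value. -/
def CC.sat : CC → ℝ≥0 → Prop
  | .lt m, x => x < (m : ℝ≥0)
  | .gt m, x => (m : ℝ≥0) < x
  | .eq m, x => x = (m : ℝ≥0)
  | .and φ ψ, x => φ.sat x ∧ ψ.sat x

/-- The largest constant appearing in a clock constraint. -/
def CC.maxConst : CC → ℕ
  | .lt m => m
  | .gt m => m
  | .eq m => m
  | .and φ ψ => max φ.maxConst ψ.maxConst

/-- A transition of a one-clock timed automaton; `reset = true` means the
clock is reset (the `r = 0` case). -/
structure TTrans (Q A : Type) where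
  src : Q
  dst : Q
  lab : A
  guard : CC
  reset : Bool

/-- A one-clock timed automaton. -/
structure TA (A : Type) where
  Q : Type
  init : Q
  final : Set Q
  trans : Set (TTrans Q A)

/-- The automaton has finitely many states and transitions. -/
def TA.IsFinite {A : Type} (M : TA A) : Prop := Finite M.Q ∧ M.trans.Finite

/-- Runs of a one-clock timed automaton between configurations. -/
inductive Steps {A : Type} (M : TA A) : M.Q × ℝ≥0 → TimedWord A → M.Q × ℝ≥0 → Prop
  | nil (c : M.Q × ℝ≥0) : Steps M c [] c
  | cons {q : M.Q} {ν t : ℝ≥0} {a : A} {w : TimedWord A} {c : M.Q × ℝ≥0}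
      (θ : TTrans M.Q A) (hθ : θ ∈ M.trans) (hsrc : θ.src = q) (hlab : θ.lab = a)
      (hg : θ.guard.sat (ν + t))
      (hrest : Steps M (θ.dst, if θ.reset then 0 else ν + t) w c) :
      Steps M (q, ν) ((t, a) :: w) c

/-- The language of `M` from a given configuration. -/
def TA.LangFrom {A : Type} (M : TA A) (c : M.Q × ℝ≥0) : Set (TimedWord A) :=
  {w | ∃ q' : M.Q, ∃ ν' : ℝ≥0, Steps M c w (q', ν') ∧ q' ∈ M.final}

/-- The language of `M` (from the initial configuration). -/
def TA.Lang {A : Type} (M : TA A) : Set (TimedWord A) := M.LangFrom (M.init, 0)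

/-- Determinism: distinct transitions with the same source and letter have
disjoint guards. -/
def TA.Deterministic {A : Type} (M : TA A) : Prop :=
  ∀ θ₁ ∈ M.trans, ∀ θ₂ ∈ M.trans, θ₁ ≠ θ₂ → θ₁.src = θ₂.src → θ₁.lab = θ₂.lab →
    ∀ x : ℝ≥0, ¬ (θ₁.guard.sat x ∧ θ₂.guard.sat x)

/-- Completeness: every timed word admits a run from the initial configuration. -/
def TA.Complete {A : Type} (M : TA A) : Prop :=
  ∀ w : TimedWord A, ∃ c : M.Q × ℝ≥0, Steps M (M.init, 0) w c

/-- A 1-IRTA: every resetting transition has an equality guard. -/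
def TA.IsIRTA {A : Type} (M : TA A) : Prop :=
  ∀ θ ∈ M.trans, θ.reset = true → ∃ m : ℕ, θ.guard = CC.eq m

/-- Guards allowed in a strict 1-IRTA with constant `K`. -/
def StrictGuard (K : ℕ) (φ : CC) : Prop :=
  (∃ m : ℕ, φ = CC.eq m) ∨ (∃ m : ℕ, φ = CC.and (CC.gt m) (CC.lt (m + 1))) ∨ φ = CC.gt K

/-- Strictness with constant `K`: every guard is of one of the allowed forms
and a guard is an equality iff the transition resets. -/
def TA.IsStrict {A : Type} (M : TA A) (K : ℕ) : Prop :=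
  ∀ θ ∈ M.trans, StrictGuard K θ.guard ∧ ((∃ m : ℕ, θ.guard = CC.eq m) ↔ θ.reset = true)

/-- All constants appearing in guards are at most `K`. -/
def TA.MaxConstLE {A : Type} (M : TA A) (K : ℕ) : Prop :=
  ∀ θ ∈ M.trans, θ.guard.maxConst ≤ K

/-- `M` reaches the same control state on reading `u` and `v` from the initial
configuration. -/
def TA.SameState {A : Type} (M : TA A) (u v : TimedWord A) : Prop :=
  ∃ q : M.Q, ∃ ν ν' : ℝ≥0, Steps M (M.init, 0) u (q, ν) ∧ Steps M (M.init, 0) v (q, ν')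

/-- A `K`-acceptor. -/
def IsKAcceptor {A : Type} (M : TA A) (K : ℕ) : Prop :=
  M.IsFinite ∧ M.Complete ∧ M.Deterministic ∧ M.IsIRTA ∧ M.IsStrict K ∧ M.MaxConstLE K ∧
    ∀ u v : TimedWord A, M.SameState u v → RegEq K (cKW K u) (cKW K v)

/-! ### Equivalences on timed words -/

/-- `L`-preservation of a relation on timed words. -/
def LPreserving {A : Type} (L : Set (TimedWord A)) (r : TimedWord A → TimedWord A → Prop) :
    Prop :=
  ∀ u v : TimedWord A, r u v → (u ∈ L ↔ v ∈ L)

/-- `K`-monotonicity of a relation on timed words. -/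
def KMonotonic {A : Type} (K : ℕ) (r : TimedWord A → TimedWord A → Prop) : Prop :=
  ∀ u v : TimedWord A, r u v →
    RegEq K (cKW K u) (cKW K v) ∧
      ∀ (a : A) (t t' : ℝ≥0), RegEq K (cKW K u + t) (cKW K v + t') →
        r (u ++ [(t, a)]) (v ++ [(t', a)])

/-- Finite index: there are finitely many classes `{v | r u v}`. -/
def FiniteIndex {A : Type} (r : TimedWord A → TimedWord A → Prop) : Prop :=
  Set.Finite (Set.range fun u : TimedWord A => {v : TimedWord A | r u v})

/-! ### The rescaling maps -/

/-- The bijection `f_{λ→λ'}` of the open unit interval. -/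
noncomputable def fScale (lam lam' t : ℝ≥0) : ℝ≥0 :=
  if t ≤ lam then (lam' / lam) * t else lam' + ((1 - lam') / (1 - lam)) * (t - lam)

/-- The new delay `t'` computed from the current clock values `y, y'` and delay `t`. -/
noncomputable def tauStep (K : ℕ) (y y' t : ℝ≥0) : ℝ≥0 :=
  if (IsNatVal y ∧ IsNatVal y') ∨ ((K : ℝ≥0) < y ∧ (K : ℝ≥0) < y') then t
  else (⌊t⌋₊ : ℝ≥0) + fScale (1 - fracPart y) (1 - fracPart y') (fracPart t)

/-- Auxiliary rescaling map on timestamps, carrying the current clock values. -/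
noncomputable def tauAux (K : ℕ) : ℝ≥0 → ℝ≥0 → Timestamp → Timestamp
  | _, _, [] => []
  | y, y', t :: d =>
      tauStep K y y' t ::
        tauAux K (resetStep K (y + t)) (resetStep K (y' + tauStep K y y' t)) d

/-- The rescaling map `τ_{x→x'}` on timestamps. -/
noncomputable def tau (K : ℕ) (x x' : ℝ≥0) (d : Timestamp) : Timestamp :=
  tauAux K (resetStep K x) (resetStep K x') d

/-- Auxiliary rescaling map on timed words. -/
noncomputable def tauWAux {A : Type} (K : ℕ) : ℝ≥0 → ℝ≥0 → TimedWord A → TimedWord A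
  | _, _, [] => []
  | y, y', (t, a) :: w =>
      (tauStep K y y' t, a) ::
        tauWAux K (resetStep K (y + t)) (resetStep K (y' + tauStep K y y' t)) w

/-- The rescaling map `τ_{x→x'}` on timed words. -/
noncomputable def tauW {A : Type} (K : ℕ) (x x' : ℝ≥0) (w : TimedWord A) : TimedWord A :=
  tauWAux K (resetStep K x) (resetStep K x') w

/-! ### Residuals and the syntactic equivalence -/

/-- The residual language `u^{-1}L`. -/
def residual {A : Type} (L : Set (TimedWord A)) (u : TimedWord A) : Set (TimedWord A) :=
  {w : TimedWord A | u ++ w ∈ L}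

/-- The syntactic equivalence `≈^{L,K}`. -/
def ApproxLK {A : Type} (L : Set (TimedWord A)) (K : ℕ) (u v : TimedWord A) : Prop :=
  RegEq K (cKW K u) (cKW K v) ∧
    (tauW K (cKW K u) (cKW K v)) '' (residual L u) = residual L v

/-! ### The automaton built from a monotonic equivalence -/

/-- The region guard `φ([t])`. -/
noncomputable def phiOf (K : ℕ) (t : ℝ≥0) : CC :=
  if t ≤ (K : ℝ≥0) then
    (if IsNatVal t then CC.eq ⌊t⌋₊ else CC.and (CC.gt ⌊t⌋₊) (CC.lt (⌊t⌋₊ + 1)))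
  else CC.gt K

/-- The automaton `A_≈` built from an equivalence `s` on timed words. -/
noncomputable def Aapprox {A : Type} (L : Set (TimedWord A)) (K : ℕ)
    (s : Setoid (TimedWord A)) : TA A where
  Q := Quotient s
  init := Quotient.mk s ([] : TimedWord A)
  final := {q : Quotient s | ∃ u : TimedWord A, q = Quotient.mk s u ∧ u ∈ L}
  trans := {θ : TTrans (Quotient s) A |
    ∃ (u : TimedWord A) (a : A) (t : ℝ≥0),
      θ.src = Quotient.mk s u ∧ θ.dst = Quotient.mk s (u ++ [(t, a)]) ∧ θ.lab = a ∧
      θ.guard = phiOf K (cKW K u + t) ∧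
      (θ.reset = true ↔ ∃ m : ℕ, m ≤ K ∧ cKW K u + t = (m : ℝ≥0))}

/-! ### Half-integral and small words -/

/-- Every delay has fractional part `0` or `1/2`. -/
def HalfIntegral {A : Type} (w : TimedWord A) : Prop :=
  ∀ p ∈ w, fracPart p.1 = 0 ∨ fracPart p.1 = 1 / 2

/-- Every delay is `< K + 1`. -/
def SmallWord {A : Type} (K : ℕ) (w : TimedWord A) : Prop :=
  ∀ p ∈ w, p.1 < (K : ℝ≥0) + 1

/-- The delays of `Σ_K`: half-integral values `≤ K + 1/2`. -/
def IsSigmaK (K : ℕ) (t : ℝ≥0) : Prop :=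
  (fracPart t = 0 ∨ fracPart t = 1 / 2) ∧ t ≤ (K : ℝ≥0) + 1 / 2

/-- Words over `Σ_K` (small half-integral words). -/
def SigmaWord {A : Type} (K : ℕ) (w : TimedWord A) : Prop :=
  ∀ p ∈ w, IsSigmaK K p.1



/-! ### `K`-acceptors with their region representatives -/

/-- A `K`-acceptor bundled with the half-integral representative of the
unique region of each state. -/
structure KAcc (A : Type) (K : ℕ) where
  M : TA A
  acc : IsKAcceptor M K
  reg : M.Q → ℝ≥0
  regHalf : ∀ q : M.Q, fracPart (reg q) = 0 ∨ fracPart (reg q) = 1 / 2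
  regLe : ∀ q : M.Q, reg q ≤ (K : ℝ≥0) + 1 / 2
  regSpec : ∀ (w : TimedWord A) (q : M.Q) (x : ℝ≥0),
    Steps M (M.init, 0) w (q, x) → RegEq K x (reg q)

/-- The minimization equivalences `∼^i` on the states of a `K`-acceptor. -/
def simEq {A : Type} {K : ℕ} (B : KAcc A K) : ℕ → B.M.Q → B.M.Q → Prop
  | 0, p, q => B.reg p = B.reg q ∧ (p ∈ B.M.final ↔ q ∈ B.M.final)
  | i + 1, p, q => simEq B i p q ∧
      ∀ (t : ℝ≥0) (a : A), IsSigmaK K t →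
        ∀ θ₁ θ₂ : TTrans B.M.Q A, θ₁ ∈ B.M.trans → θ₂ ∈ B.M.trans →
          θ₁.src = p → θ₂.src = q → θ₁.lab = a → θ₂.lab = a →
          θ₁.guard = phiOf K t → θ₂.guard = phiOf K t →
          simEq B i θ₁.dst θ₂.dst

/-- The quotient automaton `B/∼^m`. -/
noncomputable def quotTA {A : Type} {K : ℕ} (B : KAcc A K) (m : ℕ) : TA A where
  Q := Quot (simEq B m)
  init := Quot.mk (simEq B m) B.M.init
  final := {c : Quot (simEq B m) | ∃ q ∈ B.M.final, c = Quot.mk (simEq B m) q}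
  trans := {θ : TTrans (Quot (simEq B m)) A |
    ∃ θ₀ ∈ B.M.trans,
      θ.src = Quot.mk (simEq B m) θ₀.src ∧ θ.dst = Quot.mk (simEq B m) θ₀.dst ∧
      θ.lab = θ₀.lab ∧ θ.guard = θ₀.guard ∧ θ.reset = θ₀.reset}

/-! ### Observation tables -/

/-- An observation table over `Σ_K`. -/
structure ObsTable (A : Type) (K : ℕ) where
  U1 : Set (TimedWord A)
  E : Set (TimedWord A)
  val : TimedWord A → TimedWord A → Bool
  U1fin : U1.Finite
  Efin : E.Finite
  U1sigma : ∀ u ∈ U1, SigmaWord K u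
  Esigma : ∀ e ∈ E, SigmaWord K e
  epsU1 : ([] : TimedWord A) ∈ U1
  prefixClosed : ∀ (u : TimedWord A) (x : ℝ≥0 × A), u ++ [x] ∈ U1 → u ∈ U1
  epsE : ([] : TimedWord A) ∈ E
  suffixClosed : ∀ (x : ℝ≥0 × A) (e : TimedWord A), x :: e ∈ E → e ∈ E

/-- The set `U2` of one-letter `Σ_K`-extensions of `U1`. -/
def obsU2 {A : Type} {K : ℕ} (T : ObsTable A K) : Set (TimedWord A) :=
  {w : TimedWord A | ∃ u ∈ T.U1, ∃ (t : ℝ≥0) (a : A), IsSigmaK K t ∧ w = u ++ [(t, a)]}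

/-- `R(u)`: the row of `u` (restricted to `E`) together with `c^K_⊤(u)`. -/
noncomputable def Rof {A : Type} {K : ℕ} (T : ObsTable A K) (u : TimedWord A) :
    ({e : TimedWord A // e ∈ T.E} → Bool) × WithTop ℝ≥0 :=
  (fun e => T.val u e.1, cKTop K u)

/-- The table is closed. -/
def ObsTable.Closed {A : Type} {K : ℕ} (T : ObsTable A K) : Prop :=
  ∀ w ∈ obsU2 T, ∃ u ∈ T.U1, Rof T w = Rof T u

/-- The table is consistent. -/
def ObsTable.Consistent {A : Type} {K : ℕ} (T : ObsTable A K) : Prop :=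
  ∀ u ∈ T.U1, ∀ w ∈ T.U1, Rof T u = Rof T w →
    ∀ (t : ℝ≥0) (a : A), IsSigmaK K t → Rof T (u ++ [(t, a)]) = Rof T (w ++ [(t, a)])

/-- The automaton `A_𝒯` induced by a (closed and consistent) observation table. -/
noncomputable def ATable {A : Type} {K : ℕ} (T : ObsTable A K) : TA A where
  Q := {f : ({e : TimedWord A // e ∈ T.E} → Bool) × WithTop ℝ≥0 // ∃ u ∈ T.U1, f = Rof T u}
  init := ⟨Rof T [], ⟨[], T.epsU1, rfl⟩⟩
  final := {q | ∃ u ∈ T.U1, q.1 = Rof T u ∧ T.val u [] = true}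
  trans := {θ | ∃ u ∈ T.U1, ∃ (t : ℝ≥0) (a : A), IsSigmaK K t ∧
      θ.src.1 = Rof T u ∧ θ.dst.1 = Rof T (u ++ [(t, a)]) ∧ θ.lab = a ∧
      θ.guard = phiOf K (cKW K u + t) ∧
      (θ.reset = true ↔ ∃ m : ℕ, m ≤ K ∧ cKW K u + t = (m : ℝ≥0))}

/-- A `K`-acceptor is consistent with the observation table `𝒯`. -/
def ConsistentWith {A : Type} {K : ℕ} (M : TA A) (T : ObsTable A K) : Prop :=
  ∀ w : TimedWord A, (w ∈ T.U1 ∨ w ∈ obsU2 T) → ∀ e ∈ T.E,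
    ∀ (q : M.Q) (ν : ℝ≥0), Steps M (M.init, 0) (w ++ e) (q, ν) →
      (q ∈ M.final ↔ T.val w e = true)

/-- Isomorphism of one-clock timed automata. -/
structure TAIso {A : Type} (M N : TA A) where
  toEquiv : M.Q ≃ N.Q
  init_eq : toEquiv M.init = N.init
  final_iff : ∀ q : M.Q, q ∈ M.final ↔ toEquiv q ∈ N.final
  trans_iff : ∀ θ : TTrans M.Q A,
    θ ∈ M.trans ↔
      (⟨toEquiv θ.src, toEquiv θ.dst, θ.lab, θ.guard, θ.reset⟩ : TTrans N.Q A) ∈ N.trans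

/-!
A `K`-acceptor is deterministic, its guards are unions of regions, and its transitions reset
exactly at the integral clock values `≤ K`; hence after reading `u` its clock holds `c^K(u)`,
and the two one-letter extensions of `v` lead it to the same state with region-equivalent clock
values. Each step of `τ` rescales the fractional part of the delay so that the new clock value
stays region-equivalent to the old one, so `τ` carries accepting runs from one clock value to the
other; being an involution, it maps one residual onto the other.
-/

lemma floor_add_fracPart (x : ℝ≥0) : (⌊x⌋₊ : ℝ≥0) + fracPart x = x :=
  add_tsub_cancel_of_le (Nat.floor_le zero_le)

lemma fracPart_lt_one (x : ℝ≥0) : fracPart x < 1 :=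
  tsub_lt_iff_left (Nat.floor_le zero_le) |>.2 (by exact_mod_cast Nat.lt_floor_add_one x)

lemma floor_natCast_add {s : ℝ≥0} (n : ℕ) (hs : s < 1) : ⌊(n : ℝ≥0) + s⌋₊ = n :=
  (Nat.floor_eq_iff (by positivity)).2 ⟨le_self_add, by gcongr⟩

lemma fracPart_natCast_add {s : ℝ≥0} (n : ℕ) (hs : s < 1) : fracPart ((n : ℝ≥0) + s) = s := by
  rw [fracPart, floor_natCast_add n hs, add_tsub_cancel_left]

lemma eq_natCast_iff {x : ℝ≥0} {m : ℕ} : x = m ↔ ⌊x⌋₊ = m ∧ fracPart x = 0 := by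
  refine ⟨?_, fun ⟨hfl, hfr⟩ => ?_⟩
  · rintro rfl
    simp [fracPart]
  · rw [← floor_add_fracPart x, hfl, hfr, add_zero]

lemma fracPart_eq_zero_iff {x : ℝ≥0} : fracPart x = 0 ↔ IsNatVal x :=
  ⟨fun h => ⟨⌊x⌋₊, eq_natCast_iff.2 ⟨rfl, h⟩⟩, fun ⟨_, hm⟩ => (eq_natCast_iff.1 hm).2⟩

section RegEq

variable {K : ℕ} {x y : ℝ≥0}

lemma regEq_refl (K : ℕ) (x : ℝ≥0) : RegEq K x x := Or.inl ⟨rfl, Iff.rfl⟩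

lemma RegEq.symm (h : RegEq K x y) : RegEq K y x :=
  h.imp (fun ⟨hfl, hfr⟩ => ⟨hfl.symm, hfr.symm⟩) And.symm

lemma RegEq.eq_natCast {m : ℕ} (h : RegEq K x y) (hm : m ≤ K) (hx : x = m) : y = m := by
  rcases h with ⟨hfl, hfr⟩ | ⟨hK, -⟩
  · obtain ⟨hxfl, hxfr⟩ := eq_natCast_iff.1 hx
    exact eq_natCast_iff.2 ⟨hfl ▸ hxfl, hfr.1 hxfr⟩
  · exact absurd (hx ▸ hK) (not_lt.2 (by exact_mod_cast hm))

lemma regEq_natCast_add {s s' : ℝ≥0} (N : ℕ) (hs : s < 1) (hs' : s' < 1) (hz : s = 0 ↔ s' = 0) :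
    RegEq K (N + s) (N + s') :=
  Or.inl ⟨by rw [floor_natCast_add N hs, floor_natCast_add N hs'],
    by rwa [fracPart_natCast_add N hs, fracPart_natCast_add N hs']⟩

lemma resetStep_zero : resetStep K 0 = 0 := if_pos ⟨0, K.zero_le, Nat.cast_zero.symm⟩

lemma resetStep_resetStep (x : ℝ≥0) : resetStep K (resetStep K x) = resetStep K x := by
  by_cases h : ∃ m : ℕ, m ≤ K ∧ x = m
  · rw [show resetStep K x = 0 from if_pos h, resetStep_zero]
  · simp only [resetStep, if_neg h]

lemma regEq_resetStep (h : RegEq K x y) : RegEq K (resetStep K x) (resetStep K y) := by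
  unfold resetStep
  by_cases hx : ∃ m : ℕ, m ≤ K ∧ x = m
  · obtain ⟨m, hm, hxm⟩ := hx
    rw [if_pos ⟨m, hm, hxm⟩, if_pos ⟨m, hm, h.eq_natCast hm hxm⟩]
    exact regEq_refl K 0
  · have hy : ¬ ∃ m : ℕ, m ≤ K ∧ y = m := fun ⟨m, hm, hym⟩ => hx ⟨m, hm, h.symm.eq_natCast hm hym⟩
    rwa [if_neg hx, if_neg hy]

lemma RegEq.floor_eq_and_fracPart_ne_zero (h : RegEq K x y)
    (hc : ¬ ((IsNatVal x ∧ IsNatVal y) ∨ ((K : ℝ≥0) < x ∧ (K : ℝ≥0) < y))) :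
    ⌊x⌋₊ = ⌊y⌋₊ ∧ fracPart x ≠ 0 ∧ fracPart y ≠ 0 := by
  rcases h with ⟨hfl, hfr⟩ | hK
  · refine ⟨hfl, fun hx => hc (Or.inl ?_), fun hy => hc (Or.inl ?_)⟩
    · exact ⟨fracPart_eq_zero_iff.1 hx, fracPart_eq_zero_iff.1 (hfr.1 hx)⟩
    · exact ⟨fracPart_eq_zero_iff.1 (hfr.2 hy), fracPart_eq_zero_iff.1 hy⟩
  · exact absurd (Or.inr hK) hc

lemma natCast_add_add_eq_of_lt {n : ℕ} {f g : ℝ≥0} (hf : f ≤ 1) (hg : 1 - f < g) :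
    (n : ℝ≥0) + f + g = ((n + 1 : ℕ) : ℝ≥0) + (f + g - 1) := by
  have : 1 ≤ f + g := ((tsub_lt_iff_left hf).1 hg).le
  rw [add_assoc, Nat.cast_succ, add_assoc, add_tsub_cancel_of_le this]

lemma regEq_natCast_add_add {n : ℕ} {f f' g g' : ℝ≥0} (hf : f ∈ Set.Ioo 0 1)
    (hf' : f' ∈ Set.Ioo 0 1) (hg : g < 1) (hg' : g' < 1) (hlt : g < 1 - f ↔ g' < 1 - f')
    (heq : g = 1 - f ↔ g' = 1 - f') : RegEq K (n + f + g) (n + f' + g') := by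
  rcases lt_trichotomy g (1 - f) with h | h | h
  · rw [add_assoc, add_assoc]
    exact regEq_natCast_add n (lt_tsub_iff_left.1 h) (lt_tsub_iff_left.1 (hlt.1 h))
      (iff_of_false (add_pos_of_pos_of_nonneg hf.1 zero_le).ne'
        (add_pos_of_pos_of_nonneg hf'.1 zero_le).ne')
  · rw [add_assoc, add_assoc, h, heq.1 h, add_tsub_cancel_of_le hf.2.le,
      add_tsub_cancel_of_le hf'.2.le]
    exact regEq_refl K _
  · have h' : 1 - f' < g' :=
      lt_of_le_of_ne (not_lt.1 (mt hlt.2 h.not_gt)) (Ne.symm (mt heq.2 h.ne'))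
    have hsum {a b : ℝ≥0} (ha : a < 1) (hb : b < 1) (hab : 1 - a < b) :
        0 < a + b - 1 ∧ a + b - 1 < 1 :=
      ⟨tsub_pos_of_lt ((tsub_lt_iff_left ha.le).1 hab),
        (tsub_lt_iff_left ((tsub_lt_iff_left ha.le).1 hab).le).2 (add_lt_add ha hb)⟩
    rw [natCast_add_add_eq_of_lt hf.2.le h, natCast_add_add_eq_of_lt hf'.2.le h']
    exact regEq_natCast_add _ (hsum hf.2 hg h).2 (hsum hf'.2 hg' h').2
      (iff_of_false (hsum hf.2 hg h).1.ne' (hsum hf'.2 hg' h').1.ne')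

end RegEq

section fScale

variable {lam lam' t : ℝ≥0}

lemma fScale_of_le (ht : t ≤ lam) : fScale lam lam' t = lam' / lam * t := if_pos ht

lemma fScale_of_lt (ht : lam < t) :
    fScale lam lam' t = lam' + (1 - lam') / (1 - lam) * (t - lam) := if_neg ht.not_ge

lemma fScale_self (hlam : lam ≠ 0) : fScale lam lam' lam = lam' := by
  rw [fScale_of_le le_rfl, div_mul_cancel₀ _ hlam]

lemma fScale_one (hlam : lam < 1) (hlam' : lam' ≤ 1) : fScale lam lam' 1 = 1 := by
  rw [fScale_of_lt hlam, div_mul_cancel₀ _ (tsub_pos_of_lt hlam).ne',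
    add_tsub_cancel_of_le hlam']

lemma strictMono_fScale (hlam : lam ∈ Set.Ioo 0 1) (hlam' : lam' ∈ Set.Ioo 0 1) :
    StrictMono (fScale lam lam') := by
  intro s t hst
  have hslope : 0 < (1 - lam') / (1 - lam) :=
    div_pos (tsub_pos_of_lt hlam'.2) (tsub_pos_of_lt hlam.2)
  rcases le_or_gt t lam with ht | ht
  · rw [fScale_of_le (hst.le.trans ht), fScale_of_le ht]
    exact mul_lt_mul_of_pos_left hst (div_pos hlam'.1 hlam.1)
  rcases le_or_gt s lam with hs | hs
  · rw [fScale_of_le hs, fScale_of_lt ht]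
    calc lam' / lam * s ≤ lam' / lam * lam := by gcongr
      _ = lam' := div_mul_cancel₀ _ hlam.1.ne'
      _ < _ := lt_add_of_pos_right _ (mul_pos hslope (tsub_pos_of_lt ht))
  · rw [fScale_of_lt hs, fScale_of_lt ht]
    gcongr
    exact tsub_lt_tsub_right_of_le hs.le hst

lemma fScale_lt_iff (hlam : lam ∈ Set.Ioo 0 1) (hlam' : lam' ∈ Set.Ioo 0 1) :
    fScale lam lam' t < lam' ↔ t < lam := by
  simpa only [fScale_self hlam.1.ne'] using
    (strictMono_fScale hlam hlam').lt_iff_lt (a := t) (b := lam)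

lemma fScale_eq_iff (hlam : lam ∈ Set.Ioo 0 1) (hlam' : lam' ∈ Set.Ioo 0 1) :
    fScale lam lam' t = lam' ↔ t = lam := by
  simpa only [fScale_self hlam.1.ne'] using
    (strictMono_fScale hlam hlam').injective.eq_iff (a := t) (b := lam)

lemma fScale_lt_one (hlam : lam ∈ Set.Ioo 0 1) (hlam' : lam' ∈ Set.Ioo 0 1) (ht : t < 1) :
    fScale lam lam' t < 1 :=
  fScale_one hlam.2 hlam'.2.le ▸ strictMono_fScale hlam hlam' ht

lemma fScale_fScale (hlam : lam ∈ Set.Ioo 0 1) (hlam' : lam' ∈ Set.Ioo 0 1) :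
    fScale lam' lam (fScale lam lam' t) = t := by
  rcases le_or_gt t lam with ht | ht
  · have hle : fScale lam lam' t ≤ lam' := by
      simpa only [fScale_self hlam.1.ne'] using (strictMono_fScale hlam hlam').monotone ht
    rw [fScale_of_le hle, fScale_of_le ht, ← mul_assoc, div_mul_div_cancel₀ hlam'.1.ne',
      div_self hlam.1.ne', one_mul]
  · have hlt : lam' < fScale lam lam' t := by
      simpa only [fScale_self hlam.1.ne'] using strictMono_fScale hlam hlam' ht
    rw [fScale_of_lt hlt, fScale_of_lt ht, add_tsub_cancel_left, ← mul_assoc,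
      div_mul_div_cancel₀ (tsub_pos_of_lt hlam'.2).ne', div_self (tsub_pos_of_lt hlam.2).ne',
      one_mul, add_tsub_cancel_of_le ht.le]

end fScale

section tauStep

variable {K : ℕ} {y y' : ℝ≥0}

lemma one_sub_fracPart_mem_Ioo (hy : fracPart y ≠ 0) : 1 - fracPart y ∈ Set.Ioo 0 1 :=
  ⟨tsub_pos_of_lt (fracPart_lt_one y), tsub_lt_self one_pos (pos_iff_ne_zero.2 hy)⟩

lemma regEq_tauStep (h : RegEq K y y') (t : ℝ≥0) : RegEq K (y + t) (y' + tauStep K y y' t) := by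
  unfold tauStep
  split_ifs with hc
  · have hK : ((K : ℝ≥0) < y ∧ (K : ℝ≥0) < y') ∨ y = y' := by
      rcases hc with ⟨⟨m, rfl⟩, ⟨m', rfl⟩⟩ | hK
      · rcases h with ⟨hfl, -⟩ | hK
        · exact Or.inr (by simpa using hfl)
        · exact Or.inl hK
      · exact Or.inl hK
    rcases hK with ⟨hy, hy'⟩ | rfl
    · exact Or.inr ⟨hy.trans_le le_self_add, hy'.trans_le le_self_add⟩
    · exact regEq_refl K _
  · obtain ⟨hfl, hf, hf'⟩ := h.floor_eq_and_fracPart_ne_zero hc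
    have hlam := one_sub_fracPart_mem_Ioo hf
    have hlam' := one_sub_fracPart_mem_Ioo hf'
    have hy : y + t = ((⌊y⌋₊ + ⌊t⌋₊ : ℕ) : ℝ≥0) + fracPart y + fracPart t := by
      conv_lhs => rw [← floor_add_fracPart y, ← floor_add_fracPart t]
      push_cast; ring
    have hy' : y' + (⌊t⌋₊ + fScale (1 - fracPart y) (1 - fracPart y') (fracPart t)) =
        ((⌊y⌋₊ + ⌊t⌋₊ : ℕ) : ℝ≥0) + fracPart y' +
          fScale (1 - fracPart y) (1 - fracPart y') (fracPart t) := by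
      nth_rw 1 [← floor_add_fracPart y']
      rw [hfl]; push_cast; ring
    rw [hy, hy']
    exact regEq_natCast_add_add ⟨pos_iff_ne_zero.2 hf, fracPart_lt_one y⟩
      ⟨pos_iff_ne_zero.2 hf', fracPart_lt_one y'⟩ (fracPart_lt_one t)
      (fScale_lt_one hlam hlam' (fracPart_lt_one t)) (fScale_lt_iff hlam hlam').symm
      (fScale_eq_iff hlam hlam').symm

lemma tauStep_tauStep (h : RegEq K y y') (t : ℝ≥0) : tauStep K y' y (tauStep K y y' t) = t := by
  by_cases hc : (IsNatVal y ∧ IsNatVal y') ∨ ((K : ℝ≥0) < y ∧ (K : ℝ≥0) < y')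
  · have hc' : (IsNatVal y' ∧ IsNatVal y) ∨ ((K : ℝ≥0) < y' ∧ (K : ℝ≥0) < y) := by tauto
    simp only [tauStep, if_pos hc, if_pos hc']
  · have hc' : ¬ ((IsNatVal y' ∧ IsNatVal y) ∨ ((K : ℝ≥0) < y' ∧ (K : ℝ≥0) < y)) := by tauto
    obtain ⟨-, hf, hf'⟩ := h.floor_eq_and_fracPart_ne_zero hc
    have hlam := one_sub_fracPart_mem_Ioo hf
    have hlam' := one_sub_fracPart_mem_Ioo hf'
    have hlt := fScale_lt_one hlam hlam' (fracPart_lt_one t)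
    simp only [tauStep, if_neg hc, if_neg hc']
    rw [floor_natCast_add _ hlt, fracPart_natCast_add _ hlt, fScale_fScale hlam hlam',
      floor_add_fracPart]

end tauStep

section Guards

variable {K : ℕ} {x y : ℝ≥0}

lemma CC.sat_congr_of_floor (hfl : ⌊x⌋₊ = ⌊y⌋₊) (hfr : fracPart x = 0 ↔ fracPart y = 0)
    (φ : CC) : φ.sat x ↔ φ.sat y := by
  have hlt (m : ℕ) : x < m ↔ y < m := by
    rw [← Nat.floor_lt zero_le, ← Nat.floor_lt zero_le, hfl]
  have heq (m : ℕ) : x = m ↔ y = m := by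
    rw [eq_natCast_iff, eq_natCast_iff, hfl, hfr]
  induction φ with
  | lt m => exact hlt m
  | eq m => exact heq m
  | gt m =>
    show (m : ℝ≥0) < x ↔ (m : ℝ≥0) < y
    rw [← not_le, ← not_le, le_iff_lt_or_eq, le_iff_lt_or_eq, hlt, heq]
  | and φ ψ hφ hψ => exact and_congr hφ hψ

lemma CC.sat_congr_of_lt {φ : CC} (hφ : φ.maxConst ≤ K) (hx : (K : ℝ≥0) < x)
    (hy : (K : ℝ≥0) < y) : φ.sat x ↔ φ.sat y := by
  have hK {m : ℕ} (hm : m ≤ K) {z : ℝ≥0} (hz : (K : ℝ≥0) < z) : (m : ℝ≥0) < z :=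
    lt_of_le_of_lt (by exact_mod_cast hm) hz
  induction φ with
  | lt m => exact iff_of_false (hK hφ hx).not_gt (hK hφ hy).not_gt
  | eq m => exact iff_of_false (hK hφ hx).ne' (hK hφ hy).ne'
  | gt m => exact iff_of_true (hK hφ hx) (hK hφ hy)
  | and φ ψ hφ' hψ' =>
    obtain ⟨hφK, hψK⟩ := max_le_iff.1 hφ
    exact and_congr (hφ' hφK) (hψ' hψK)

lemma CC.sat_congr_of_regEq {φ : CC} (hφ : φ.maxConst ≤ K) (h : RegEq K x y) :
    φ.sat x ↔ φ.sat y := by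
  rcases h with ⟨hfl, hfr⟩ | ⟨hx, hy⟩
  · exact CC.sat_congr_of_floor hfl hfr φ
  · exact CC.sat_congr_of_lt hφ hx hy

lemma StrictGuard.not_sat_natCast {φ : CC} (hs : StrictGuard K φ) (hne : ∀ m, φ ≠ CC.eq m)
    {n : ℕ} (hn : n ≤ K) : ¬ φ.sat n := by
  rcases hs with ⟨m, rfl⟩ | ⟨m, rfl⟩ | rfl
  · exact absurd rfl (hne m)
  · rintro ⟨h1, h2⟩
    have h1 : m < n := Nat.cast_lt.1 h1
    have h2 : n < m + 1 := Nat.cast_lt.1 h2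
    omega
  · intro h
    have : K < n := Nat.cast_lt.1 h
    omega

end Guards

section Runs

variable {A : Type} {M : TA A}

lemma reset_eq_resetStep {K : ℕ} (hstrict : M.IsStrict K) (hmax : M.MaxConstLE K)
    {θ : TTrans M.Q A} (hθ : θ ∈ M.trans) {x : ℝ≥0} (hx : θ.guard.sat x) :
    (if θ.reset then 0 else x) = resetStep K x := by
  obtain ⟨hs, hiff⟩ := hstrict θ hθ
  cases hr : θ.reset
  · have hne (m : ℕ) : θ.guard ≠ CC.eq m := fun hm => by simpa [hr] using hiff.1 ⟨m, hm⟩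
    exact (if_neg fun ⟨n, hn, hxn⟩ => hs.not_sat_natCast hne hn (hxn ▸ hx)).symm
  · obtain ⟨m, hm⟩ := hiff.2 hr
    have hmK : m ≤ K := by simpa [hm, CC.maxConst] using hmax θ hθ
    rw [hm] at hx
    exact (if_pos ⟨m, hmK, hx⟩).symm

lemma Steps.append {c c' c'' : M.Q × ℝ≥0} {u w : TimedWord A} (h₁ : Steps M c u c')
    (h₂ : Steps M c' w c'') : Steps M c (u ++ w) c'' := by
  induction h₁ with
  | nil => exact h₂
  | cons θ hθ hsrc hlab hg _ ih => exact .cons θ hθ hsrc hlab hg (ih h₂)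

lemma Steps.exists_of_append {c c'' : M.Q × ℝ≥0} {u w : TimedWord A}
    (h : Steps M c (u ++ w) c'') : ∃ c', Steps M c u c' ∧ Steps M c' w c'' := by
  induction u generalizing c with
  | nil => exact ⟨c, .nil c, h⟩
  | cons x u ih =>
    cases h with
    | cons θ hθ hsrc hlab hg hrest =>
      obtain ⟨c', h₁, h₂⟩ := ih hrest
      exact ⟨c', .cons θ hθ hsrc hlab hg h₁, h₂⟩

lemma Steps.unique (hdet : M.Deterministic) {w : TimedWord A} {c c₁ c₂ : M.Q × ℝ≥0}
    (h₁ : Steps M c w c₁) (h₂ : Steps M c w c₂) : c₁ = c₂ := by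
  induction h₁ generalizing c₂ with
  | nil => cases h₂; rfl
  | cons θ₁ hθ₁ hsrc₁ hlab₁ hg₁ _ ih =>
    cases h₂ with
    | cons θ₂ hθ₂ hsrc₂ hlab₂ hg₂ hrest₂ =>
      obtain rfl : θ₁ = θ₂ := by
        by_contra hne
        exact hdet θ₁ hθ₁ θ₂ hθ₂ hne (hsrc₁.trans hsrc₂.symm) (hlab₁.trans hlab₂.symm) _
          ⟨hg₁, hg₂⟩
      exact ih hrest₂

lemma residual_eq_langFrom (hdet : M.Deterministic) {u : TimedWord A} {c : M.Q × ℝ≥0}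
    (hu : Steps M (M.init, 0) u c) : residual M.Lang u = M.LangFrom c := by
  ext w
  constructor
  · rintro ⟨q, ν, huw, hq⟩
    obtain ⟨c', hu', hw⟩ := huw.exists_of_append
    obtain rfl := hu'.unique hdet hu
    exact ⟨q, ν, hw, hq⟩
  · rintro ⟨q, ν, hw, hq⟩
    exact ⟨q, ν, hu.append hw, hq⟩

lemma nil_mem_langFrom_iff {c : M.Q × ℝ≥0} : [] ∈ M.LangFrom c ↔ c.1 ∈ M.final :=
  ⟨fun ⟨_, _, h, hq⟩ => by cases h; exact hq, fun hq => ⟨c.1, c.2, .nil c, hq⟩⟩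

section Strict

variable {K : ℕ}

lemma steps_cons_iff (hstrict : M.IsStrict K) (hmax : M.MaxConstLE K) {q : M.Q} {y t : ℝ≥0}
    {a : A} {w : TimedWord A} {c : M.Q × ℝ≥0} :
    Steps M (q, y) ((t, a) :: w) c ↔ ∃ θ ∈ M.trans, θ.src = q ∧ θ.lab = a ∧
      θ.guard.sat (y + t) ∧ Steps M (θ.dst, resetStep K (y + t)) w c := by
  constructor
  · rintro (_ | ⟨θ, hθ, hsrc, hlab, hg, hrest⟩)
    exact ⟨θ, hθ, hsrc, hlab, hg, by rwa [← reset_eq_resetStep hstrict hmax hθ hg]⟩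
  · rintro ⟨θ, hθ, hsrc, hlab, hg, hrest⟩
    exact .cons θ hθ hsrc hlab hg (by rwa [reset_eq_resetStep hstrict hmax hθ hg])

lemma cons_mem_langFrom_iff (hstrict : M.IsStrict K) (hmax : M.MaxConstLE K) {q : M.Q}
    {y t : ℝ≥0} {a : A} {w : TimedWord A} :
    (t, a) :: w ∈ M.LangFrom (q, y) ↔ ∃ θ ∈ M.trans, θ.src = q ∧ θ.lab = a ∧
      θ.guard.sat (y + t) ∧ w ∈ M.LangFrom (θ.dst, resetStep K (y + t)) := by
  simp only [TA.LangFrom, Set.mem_ofPred_eq, steps_cons_iff hstrict hmax]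
  constructor
  · rintro ⟨q', ν', ⟨θ, hθ, hsrc, hlab, hg, hw⟩, hq'⟩
    exact ⟨θ, hθ, hsrc, hlab, hg, q', ν', hw, hq'⟩
  · rintro ⟨θ, hθ, hsrc, hlab, hg, q', ν', hw, hq'⟩
    exact ⟨q', ν', ⟨θ, hθ, hsrc, hlab, hg, hw⟩, hq'⟩

lemma Steps.clock_eq_cKAux (hstrict : M.IsStrict K) (hmax : M.MaxConstLE K)
    {w : TimedWord A} {c c' : M.Q × ℝ≥0} (h : Steps M c w c') :
    c'.2 = cKAux K c.2 (w.map Prod.fst) := by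
  induction h with
  | nil => rfl
  | cons θ hθ _ _ hg _ ih => rwa [reset_eq_resetStep hstrict hmax hθ hg] at ih

lemma Steps.clock_eq_cKW (hstrict : M.IsStrict K) (hmax : M.MaxConstLE K)
    {w : TimedWord A} {q p : M.Q} {ν : ℝ≥0} (h : Steps M (q, 0) w (p, ν)) : ν = cKW K w :=
  h.clock_eq_cKAux hstrict hmax

lemma Steps.singleton_of_regEq (hstrict : M.IsStrict K) (hmax : M.MaxConstLE K)
    {q p : M.Q} {y y' t t' ν : ℝ≥0} {a : A} (h : Steps M (q, y) [(t, a)] (p, ν))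
    (hreg : RegEq K (y + t) (y' + t')) : Steps M (q, y') [(t', a)] (p, resetStep K (y' + t')) := by
  obtain ⟨θ, hθ, hsrc, hlab, hg, hnil⟩ := (steps_cons_iff hstrict hmax).1 h
  cases hnil
  exact (steps_cons_iff hstrict hmax).2
    ⟨θ, hθ, hsrc, hlab, (CC.sat_congr_of_regEq (hmax θ hθ) hreg).1 hg, .nil _⟩

lemma tauWAux_mem_langFrom (hstrict : M.IsStrict K) (hmax : M.MaxConstLE K)
    {w : TimedWord A} {q : M.Q} {y y' : ℝ≥0} (hreg : RegEq K y y') (hw : w ∈ M.LangFrom (q, y)) :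
    tauWAux K y y' w ∈ M.LangFrom (q, y') := by
  induction w generalizing q y y' with
  | nil => exact nil_mem_langFrom_iff.2 (nil_mem_langFrom_iff.1 hw : q ∈ M.final)
  | cons x w ih =>
    obtain ⟨t, a⟩ := x
    obtain ⟨θ, hθ, hsrc, hlab, hg, hw⟩ := (cons_mem_langFrom_iff hstrict hmax).1 hw
    have hreg' := regEq_tauStep hreg t
    exact (cons_mem_langFrom_iff hstrict hmax).2 ⟨θ, hθ, hsrc, hlab,
      (CC.sat_congr_of_regEq (hmax θ hθ) hreg').1 hg, ih (regEq_resetStep hreg') hw⟩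

lemma tauWAux_tauWAux {y y' : ℝ≥0} (h : RegEq K y y') (w : TimedWord A) :
    tauWAux K y' y (tauWAux K y y' w) = w := by
  induction w generalizing y y' with
  | nil => rfl
  | cons x w ih =>
    obtain ⟨t, a⟩ := x
    simp only [tauWAux]
    rw [tauStep_tauStep h, ih (regEq_resetStep (regEq_tauStep h t))]

lemma image_tauWAux_langFrom (hstrict : M.IsStrict K) (hmax : M.MaxConstLE K) {q : M.Q}
    {y y' : ℝ≥0} (hreg : RegEq K y y') :
    tauWAux K y y' '' M.LangFrom (q, y) = M.LangFrom (q, y') := by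
  refine Set.Subset.antisymm ?_ fun w hw => ?_
  · exact Set.image_subset_iff.2 fun w => tauWAux_mem_langFrom hstrict hmax hreg
  · exact ⟨tauWAux K y' y w, tauWAux_mem_langFrom hstrict hmax hreg.symm hw,
      tauWAux_tauWAux hreg.symm w⟩

end Strict

end Runs

section cK

variable {A : Type} {K : ℕ}

lemma cKAux_append (s : ℝ≥0) (d : Timestamp) (t : ℝ≥0) :
    cKAux K s (d ++ [t]) = resetStep K (cKAux K s d + t) := by
  induction d generalizing s with
  | nil => rfl
  | cons t' d ih => exact ih _

lemma cKW_append (v : TimedWord A) (t : ℝ≥0) (a : A) :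
    cKW K (v ++ [(t, a)]) = resetStep K (cKW K v + t) := by
  simp only [cKW, cK, List.map_append, List.map_cons, List.map_nil, cKAux_append]

lemma resetStep_cKW (w : TimedWord A) : resetStep K (cKW K w) = cKW K w := by
  rcases w.eq_nil_or_concat' with rfl | ⟨v, ⟨t, a⟩, rfl⟩
  · exact resetStep_zero
  · rw [cKW_append, resetStep_resetStep]

lemma tauW_cKW (u u' : TimedWord A) :
    tauW (A := A) K (cKW K u) (cKW K u') = tauWAux K (cKW K u) (cKW K u') :=
  funext fun w => by rw [tauW, resetStep_cKW, resetStep_cKW]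

end cK

theorem statement10_general {A : Type} (K : ℕ) (L : Set (TimedWord A))
    (B : TA A) (hB : IsKAcceptor B K) (hL : B.Lang = L)
    (v : TimedWord A) (a : A) (tv tv' : ℝ≥0)
    (h : RegEq K (cKW K v + tv) (cKW K v + tv')) :
    RegEq K (cKW K (v ++ [(tv, a)])) (cKW K (v ++ [(tv', a)])) ∧
      (tauW K (cKW K (v ++ [(tv', a)])) (cKW K (v ++ [(tv, a)]))) ''
          (residual L (v ++ [(tv', a)])) = residual L (v ++ [(tv, a)]) := by
  obtain ⟨-, hcomp, hdet, -, hstrict, hmax, -⟩ := hB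
  subst hL
  have hreg : RegEq K (cKW K (v ++ [(tv, a)])) (cKW K (v ++ [(tv', a)])) := by
    rw [cKW_append, cKW_append]
    exact regEq_resetStep h
  obtain ⟨⟨q, ν⟩, hrun⟩ := hcomp (v ++ [(tv, a)])
  obtain ⟨⟨p, x⟩, hv, hstep⟩ := hrun.exists_of_append
  obtain rfl : x = cKW K v := hv.clock_eq_cKW hstrict hmax
  obtain rfl : ν = cKW K (v ++ [(tv, a)]) := hrun.clock_eq_cKW hstrict hmax
  have hrun' : Steps B (B.init, 0) (v ++ [(tv', a)]) (q, cKW K (v ++ [(tv', a)])) := by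
    rw [cKW_append]
    exact hv.append (hstep.singleton_of_regEq hstrict hmax h)
  refine ⟨hreg, ?_⟩
  rw [residual_eq_langFrom hdet hrun, residual_eq_langFrom hdet hrun', tauW_cKW]
  exact image_tauWAux_langFrom hstrict hmax hreg.symm

/-- two region-equivalent one-step extensions of the same word
have rescaling-related residuals. -/
theorem statement10 {A : Type} [Finite A] (K : ℕ) (L : Set (TimedWord A))
    (B : TA A) (hB : IsKAcceptor B K) (hL : B.Lang = L)
    (v : TimedWord A) (a : A) (tv tv' : ℝ≥0)
    (h : RegEq K (cKW K v + tv) (cKW K v + tv')) :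
    RegEq K (cKW K (v ++ [(tv, a)])) (cKW K (v ++ [(tv', a)])) ∧
      (tauW K (cKW K (v ++ [(tv', a)])) (cKW K (v ++ [(tv, a)]))) ''
          (residual L (v ++ [(tv', a)])) = residual L (v ++ [(tv, a)]) :=
  statement10_general K L B hB hL v a tv tv' h

end IRTA
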